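/- Extraction commutes with arbitrary intersections in Φ: for any family (D_j)_{j∈J} of elements of Φ and any x ∈ Q, ε_x(⋂_{j∈J} D_j) = ⋂_{j∈J} ε_x(D_j). -/
import Mathlib


/-- A gamble is a bounded function. -/
def Bdd {Ω : Type*} (f : Ω → ℝ) : Prop := ∃ M : ℝ, ∀ ω, |f ω| ≤ M

/-- The set of all gambles (bounded functions) on `Ω`. -/
def L (Ω : Type*) : Set (Ω → ℝ) := {f | Bdd f}

/-- Nonnegative, nonzero gambles. -/
def Lpos (Ω : Type*) : Set (Ω → ℝ) := {f | Bdd f ∧ 0 ≤ f ∧ f ≠ 0}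

/-- Coherent set of desirable gambles. -/
def Coherent {Ω : Type*} (D : Set (Ω → ℝ)) : Prop :=
  D ⊆ L Ω ∧ Lpos Ω ⊆ D ∧ (0 : Ω → ℝ) ∉ D ∧
  (∀ f g : Ω → ℝ, f ∈ D → g ∈ D → f + g ∈ D) ∧
  (∀ (c : ℝ) (f : Ω → ℝ), f ∈ D → 0 < c → c • f ∈ D)

/-- `Φ(Ω)`: coherent sets together with the set of all gambles. -/
def Phi (Ω : Type*) : Set (Set (Ω → ℝ)) := {D | Coherent D} ∪ {L Ω}

/-- Closure operator associated to the topped ∩-structure `Φ`. -/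
def Cl {Ω : Type*} (A : Set (Ω → ℝ)) : Set (Ω → ℝ) :=
  ⋂₀ {D | D ∈ Phi Ω ∧ A ⊆ D}

/-- `f` is `x`-measurable: constant on blocks of the partition of `x`. -/
def Meas {Ω : Type*} (x : Setoid Ω) (f : Ω → ℝ) : Prop :=
  ∀ a b : Ω, x.r a b → f a = f b

/-- `L_x`: the linear space of `x`-measurable gambles. -/
def Lx {Ω : Type*} (x : Setoid Ω) : Set (Ω → ℝ) := {f | Bdd f ∧ Meas x f}

/-- Combination: `D₁ · D₂ := C(D₁ ∪ D₂)`. -/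
def comb {Ω : Type*} (D₁ D₂ : Set (Ω → ℝ)) : Set (Ω → ℝ) := Cl (D₁ ∪ D₂)

/-- Extraction: `ε_x(D) := C(D ∩ L_x)`. -/
def eps {Ω : Type*} (x : Setoid Ω) (D : Set (Ω → ℝ)) : Set (Ω → ℝ) :=
  Cl (D ∩ Lx x)

section aux
variable {Ω : Type*}

lemma bdd_add {f g : Ω → ℝ} (hf : Bdd f) (hg : Bdd g) : Bdd (f + g) := by
  obtain ⟨M, hM⟩ := hf; obtain ⟨N, hN⟩ := hg
  exact ⟨M + N, fun ω => (abs_add_le _ _).trans (add_le_add (hM ω) (hN ω))⟩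

lemma bdd_sub {f g : Ω → ℝ} (hf : Bdd f) (hg : Bdd g) : Bdd (f - g) := by
  obtain ⟨M, hM⟩ := hf; obtain ⟨N, hN⟩ := hg
  exact ⟨M + N, fun ω => (abs_sub _ _).trans (add_le_add (hM ω) (hN ω))⟩

lemma lpos_subset_phi {E : Set (Ω → ℝ)} (hE : E ∈ Phi Ω) : Lpos Ω ⊆ E := by
  rcases hE with hE | hE
  · exact hE.2.1
  · rw [Set.mem_singleton_iff] at hE; subst hE; exact fun f hf => hf.1

lemma phi_subset_L {E : Set (Ω → ℝ)} (hE : E ∈ Phi Ω) : E ⊆ L Ω := by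
  rcases hE with hE | hE
  · exact hE.1
  · rw [Set.mem_singleton_iff] at hE; subst hE; exact fun f hf => hf

lemma phi_add {E : Set (Ω → ℝ)} (hE : E ∈ Phi Ω) {f g : Ω → ℝ}
    (hf : f ∈ E) (hg : g ∈ E) : f + g ∈ E := by
  rcases hE with hE | hE
  · exact hE.2.2.2.1 f g hf hg
  · rw [Set.mem_singleton_iff] at hE; subst hE; exact bdd_add hf hg

lemma L_mem_phi : L Ω ∈ Phi Ω := Or.inr rfl

lemma cl_mono {A B : Set (Ω → ℝ)} (hAB : A ⊆ B) : Cl A ⊆ Cl B := by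
  intro f hf E hE
  exact hf E ⟨hE.1, hAB.trans hE.2⟩

lemma lpos_subset_cl (A : Set (Ω → ℝ)) : Lpos Ω ⊆ Cl A := by
  intro f hf E hE
  exact lpos_subset_phi hE.1 hf

/-- Lemma A: if `h ∈ A`, `h ≤ f`, `f` bounded, then `f ∈ Cl A`. -/
lemma mem_cl_of_le {A : Set (Ω → ℝ)} {h f : Ω → ℝ} (hA : h ∈ A)
    (hle : h ≤ f) (hfL : f ∈ L Ω) : f ∈ Cl A := by
  intro E hE
  have hhE : h ∈ E := hE.2 hA
  by_cases hfh : f = h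
  · rwa [hfh]
  · have hhL : h ∈ L Ω := phi_subset_L hE.1 hhE
    have : f - h ∈ Lpos Ω := by
      refine ⟨bdd_sub hfL hhL, ?_, sub_ne_zero.mpr hfh⟩
      intro ω
      exact sub_nonneg.mpr (hle ω)
    have := phi_add hE.1 hhE (lpos_subset_phi hE.1 this)
    rwa [add_sub_cancel] at this

/-- Lemma B: concrete description of members of `Cl (D ∩ Lx x)` for coherent `D`. -/
lemma cl_inter_Lx_sub {D : Set (Ω → ℝ)} (x : Setoid Ω) (hD : Coherent D)
    {f : Ω → ℝ} (hf : f ∈ Cl (D ∩ Lx x)) :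
    f ∈ Lpos Ω ∨ (f ∈ L Ω ∧ ∃ h ∈ D ∩ Lx x, h ≤ f) := by
  set K : Set (Ω → ℝ) := Lpos Ω ∪ {g | g ∈ L Ω ∧ ∃ h ∈ D ∩ Lx x, h ≤ g} with hK
  have hKcoh : Coherent K := by
    constructor
    · rintro g (hg | hg)
      · exact hg.1
      · exact hg.1
    refine ⟨Set.subset_union_left, ?_, ?_, ?_⟩
    · rintro (hg | hg)
      · exact hg.2.2 rfl
      · obtain ⟨hgL, h, ⟨hhD, hhLx⟩, hle⟩ := hg
        by_cases hh0 : h = 0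
        · exact hD.2.2.1 (hh0 ▸ hhD)
        · have : -h ∈ Lpos Ω := by
            refine ⟨?_, ?_, neg_ne_zero.mpr hh0⟩
            · obtain ⟨M, hM⟩ := hhLx.1; exact ⟨M, fun ω => by simpa using hM ω⟩
            · intro ω; simpa using hle ω
          have := hD.2.2.2.1 h (-h) hhD (hD.2.1 this)
          rw [add_neg_cancel] at this
          exact hD.2.2.1 this
    · intro f g hfK hgK
      rcases hfK with hfK | hfK <;> rcases hgK with hgK | hgK
      · left
        refine ⟨bdd_add hfK.1 hgK.1, fun ω => add_nonneg (hfK.2.1 ω) (hgK.2.1 ω), ?_⟩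
        intro h0
        obtain ⟨ω, hω⟩ := Function.ne_iff.mp hfK.2.2
        have hg0 : (0:ℝ) ≤ g ω := hgK.2.1 ω
        have hf0 : (0:ℝ) ≤ f ω := hfK.2.1 ω
        have : f ω = 0 := le_antisymm (by
          have := congrFun h0 ω
          simp only [Pi.add_apply, Pi.zero_apply] at this
          linarith) hf0
        exact hω (by simpa using this)
      · right
        obtain ⟨hgL, h, hh, hle⟩ := hgK
        exact ⟨bdd_add hfK.1 hgL, h, hh, fun ω => by
          have h1 : (0:ℝ) ≤ f ω := hfK.2.1 ω
          have h2 : h ω ≤ g ω := hle ω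
          simp only [Pi.add_apply]; linarith⟩
      · right
        obtain ⟨hfL, h, hh, hle⟩ := hfK
        exact ⟨bdd_add hfL hgK.1, h, hh, fun ω => by
          have h1 : (0:ℝ) ≤ g ω := hgK.2.1 ω
          have h2 : h ω ≤ f ω := hle ω
          simp only [Pi.add_apply]; linarith⟩
      · right
        obtain ⟨hfL, h, hh, hle⟩ := hfK
        obtain ⟨hgL, h', hh', hle'⟩ := hgK
        refine ⟨bdd_add hfL hgL, h + h', ⟨hD.2.2.2.1 h h' hh.1 hh'.1,
          ⟨bdd_add hh.2.1 hh'.2.1, fun a b hab => by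
            simp [Pi.add_apply, hh.2.2 a b hab, hh'.2.2 a b hab]⟩⟩,
          fun ω => add_le_add (hle ω) (hle' ω)⟩
    · intro c f hfK hc
      rcases hfK with hfK | hfK
      · left
        refine ⟨?_, ?_, ?_⟩
        · obtain ⟨M, hM⟩ := hfK.1
          exact ⟨c * M, fun ω => by
            simp only [Pi.smul_apply, smul_eq_mul, abs_mul, abs_of_pos hc]
            exact mul_le_mul_of_nonneg_left (hM ω) hc.le⟩
        · intro ω; exact mul_nonneg hc.le (hfK.2.1 ω)
        · simpa [smul_eq_zero, hc.ne'] using hfK.2.2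
      · right
        obtain ⟨hfL, h, hh, hle⟩ := hfK
        refine ⟨?_, c • h, ⟨hD.2.2.2.2 c h hh.1 hc,
          ⟨?_, fun a b hab => by simp [Pi.smul_apply, hh.2.2 a b hab]⟩⟩,
          fun ω => by
            simp only [Pi.smul_apply, smul_eq_mul]
            exact mul_le_mul_of_nonneg_left (hle ω) hc.le⟩
        · obtain ⟨M, hM⟩ := hfL
          exact ⟨c * M, fun ω => by
            simp only [Pi.smul_apply, smul_eq_mul, abs_mul, abs_of_pos hc]
            exact mul_le_mul_of_nonneg_left (hM ω) hc.le⟩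
        · obtain ⟨M, hM⟩ := hh.2.1
          exact ⟨c * M, fun ω => by
            simp only [Pi.smul_apply, smul_eq_mul, abs_mul, abs_of_pos hc]
            exact mul_le_mul_of_nonneg_left (hM ω) hc.le⟩
  have hKphi : K ∈ Phi Ω := Or.inl hKcoh
  have hsub : D ∩ Lx x ⊆ K := by
    intro g hg
    exact Or.inr ⟨hg.2.1, g, hg, le_refl g⟩
  exact hf K ⟨hKphi, hsub⟩

end aux


/-- Extraction commutes with arbitrary intersections in `Φ`. -/
theorem stmt18 {Ω : Type*} {J : Type*} [Nonempty J] (x : Setoid Ω)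
    (D : J → Set (Ω → ℝ)) (h : ∀ j, D j ∈ Phi Ω) :
    eps x (⋂ j, D j) = ⋂ j, eps x (D j) := by
  apply Set.Subset.antisymm
  · refine Set.subset_iInter fun j => cl_mono ?_
    exact Set.inter_subset_inter_left _ (Set.iInter_subset D j)
  · intro f hf
    simp only [Set.mem_iInter] at hf
    -- f is bounded
    have hfL : f ∈ L Ω := by
      obtain ⟨j0⟩ := ‹Nonempty J›
      have : D j0 ∩ Lx x ⊆ L Ω := fun g hg => hg.2.1
      exact hf j0 (L Ω) ⟨L_mem_phi, this⟩
    by_cases hfp : f ∈ Lpos Ω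
    · exact lpos_subset_cl _ hfp
    · obtain ⟨M, hM⟩ := hfL
      -- blockwise infimum of f
      set g : Ω → ℝ := fun ω => sInf (f '' {ω' | x.r ω ω'}) with hg
      have hne : ∀ ω, (f '' {ω' | x.r ω ω'}).Nonempty :=
        fun ω => ⟨f ω, ω, x.refl ω, rfl⟩
      have hbb : ∀ ω, BddBelow (f '' {ω' | x.r ω ω'}) := by
        intro ω
        exact ⟨-M, by rintro y ⟨ω', -, rfl⟩; linarith [abs_le.mp (hM ω')]⟩
      have hgle : g ≤ f := fun ω => csInf_le (hbb ω) ⟨ω, x.refl ω, rfl⟩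
      have hgbdd : Bdd g := by
        refine ⟨M, fun ω => abs_le.mpr ⟨?_, (hgle ω).trans (abs_le.mp (hM ω)).2⟩⟩
        refine le_csInf (hne ω) ?_
        rintro y ⟨ω', -, rfl⟩
        linarith [abs_le.mp (hM ω')]
      have hgmeas : Meas x g := by
        intro a b hab
        have : {ω' | x.r a ω'} = {ω' | x.r b ω'} := by
          ext ω'
          exact ⟨fun h' => x.trans (x.symm hab) h', fun h' => x.trans hab h'⟩
        simp only [hg, this]
      -- any measurable lower bound of f is ≤ g
      have hkey : ∀ k : Ω → ℝ, Meas x k → k ≤ f → k ≤ g := by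
        intro k hkm hkf ω
        refine le_csInf (hne ω) ?_
        rintro y ⟨ω', hr, rfl⟩
        calc k ω = k ω' := hkm ω ω' hr
          _ ≤ f ω' := hkf ω'
      -- g belongs to every D j
      have hgD : ∀ j, g ∈ D j := by
        intro j
        rcases h j with hj | hj
        · rcases cl_inter_Lx_sub x hj (hf j) with hfp' | ⟨-, k, ⟨hkD, hkLx⟩, hkf⟩
          · exact absurd hfp' hfp
          · have hkg : k ≤ g := hkey k hkLx.2 hkf
            by_cases hgk : g = k
            · rwa [hgk]
            · have : g - k ∈ Lpos Ω := by
                refine ⟨bdd_sub hgbdd hkLx.1, fun ω => sub_nonneg.mpr (hkg ω),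
                  sub_ne_zero.mpr hgk⟩
              have := hj.2.2.2.1 k (g - k) hkD (hj.2.1 this)
              rwa [add_sub_cancel] at this
        · rw [Set.mem_singleton_iff] at hj; rw [hj]; exact hgbdd
      exact mem_cl_of_le ⟨Set.mem_iInter.mpr hgD, hgbdd, hgmeas⟩ hgle ⟨M, hM⟩
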